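/- arXiv:2107.09430 — 2 statements merged into one kernel-verified Lean document; each statement's English description precedes it below -/
import Mathlib

section
/- (Kac's counting lemma.) Let T > 0 and let f : [0,T] → ℝ be continuously differentiable with f(0) ≠ 0, f(T) ≠ 0, and such that there is no t ∈ [0,T] with f(t) = 0 and f′(t) = 0. Then the zero set {t ∈ [0,T] : f(t) = 0} is finite, and its cardinality N₀ satisfies N₀ = lim_{ε → 0⁺} ∫₀^T (1/(2ε)) · 1_{(−ε,ε)}(f(t)) · |f′(t)| dt, where 1_{(−ε,ε)} denotes the indicator function of the interval (−ε,ε). -/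
/-!
Zeros of `f` at which `f' ≠ 0` are isolated, so the compact interval contains finitely many of
them, all interior. Around each zero take a closed interval on which `f'` keeps its sign: there
`f` is injective and its image is a neighbourhood of `0`. Off these intervals `|f| ≥ c > 0`, so for
`ε < c` the integrand lives on the intervals, and on each one the substitution `y = f t` turns
`∫ 1_{(-ε,ε)}(f t) |f' t| dt` into the length `2ε` of `(-ε, ε)`. Hence the integral equals `N₀`
for all small `ε`.
-/

open MeasureTheory Filter Set Metric Topology

theorem finite_zeros_of_hasDerivAt_ne_zero {𝕜 F : Type*} [NontriviallyNormedField 𝕜]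
    [NormedAddCommGroup F] [NormedSpace 𝕜 F] {s : Set 𝕜} (hs : IsCompact s) {f f' : 𝕜 → F}
    (hderiv : ∀ t ∈ s, HasDerivAt f (f' t) t) (hnodeg : ∀ t ∈ s, f t = 0 → f' t ≠ 0) :
    {t ∈ s | f t = 0}.Finite := by
  have hclosed : IsClosed {t ∈ s | f t = 0} :=
    (HasDerivAt.continuousOn hderiv).preimage_isClosed_of_isClosed hs.isClosed isClosed_singleton
  refine (hs.of_isClosed_subset hclosed (sep_subset _ _)).finite ?_
  refine isDiscrete_iff_nhdsNE.2 fun z hz ↦ inf_principal_eq_bot.2 ?_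
  exact ((hderiv z hz.1).eventually_ne (hnodeg z hz.1 hz.2)).mono fun t ht htz ↦ ht htz.2

theorem Set.Finite.eventually_pairwiseDisjoint_closedBall {X : Type*} [MetricSpace X]
    {Z : Set X} (hZ : Z.Finite) : ∀ᶠ δ in 𝓝 (0 : ℝ), Z.PairwiseDisjoint (closedBall · δ) := by
  have hpair : ∀ p ∈ Z ×ˢ Z, ∀ᶠ δ in 𝓝 (0 : ℝ), p.1 ≠ p.2 → δ + δ < dist p.1 p.2 := by
    rintro ⟨x, y⟩ -
    by_cases hxy : x = y
    · simp [hxy]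
    filter_upwards [eventually_lt_nhds (half_pos (dist_pos.2 hxy))] with δ hδ _
    linarith
  filter_upwards [(hZ.prod hZ).eventually_all.2 hpair] with δ hδ x hx y hy hxy
  exact closedBall_disjoint_closedBall (hδ (x, y) ⟨hx, hy⟩ hxy)

theorem eventually_strictMonoOn_or_strictAntiOn_closedBall {f f' : ℝ → ℝ} {z : ℝ}
    (hderiv : ∀ᶠ t in 𝓝 z, HasDerivAt f (f' t) t) (hcont : ContinuousAt f' z) (hz : f' z ≠ 0) :
    ∀ᶠ δ in 𝓝 0, StrictMonoOn f (closedBall z δ) ∨ StrictAntiOn f (closedBall z δ) := by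
  rcases hz.lt_or_gt with hneg | hpos
  · filter_upwards [eventually_closedBall_subset (hderiv.and (hcont.eventually_lt_const hneg))]
      with δ hδ
    exact .inr <| strictAntiOn_of_hasDerivWithinAt_neg (convex_closedBall z δ)
      (fun t ht ↦ (hδ ht).1.continuousAt.continuousWithinAt)
      (fun t ht ↦ (hδ (interior_subset ht)).1.hasDerivWithinAt)
      (fun t ht ↦ (hδ (interior_subset ht)).2)
  · filter_upwards [eventually_closedBall_subset (hderiv.and (hcont.eventually_const_lt hpos))]
      with δ hδ
    exact .inl <| strictMonoOn_of_hasDerivWithinAt_pos (convex_closedBall z δ)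
      (fun t ht ↦ (hδ ht).1.continuousAt.continuousWithinAt)
      (fun t ht ↦ (hδ (interior_subset ht)).1.hasDerivWithinAt)
      (fun t ht ↦ (hδ (interior_subset ht)).2)

theorem image_closedBall_mem_nhds_of_strictMonoOn_or_strictAntiOn {f : ℝ → ℝ} {z δ : ℝ}
    (hδ : 0 < δ) (hf : ContinuousOn f (closedBall z δ))
    (hmono : StrictMonoOn f (closedBall z δ) ∨ StrictAntiOn f (closedBall z δ)) :
    f '' closedBall z δ ∈ 𝓝 (f z) := by
  rw [Real.closedBall_eq_Icc] at hf hmono ⊢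
  have hl : z - δ ∈ Icc (z - δ) (z + δ) := ⟨le_rfl, by linarith⟩
  have hc : z ∈ Icc (z - δ) (z + δ) := ⟨by linarith, by linarith⟩
  have hr : z + δ ∈ Icc (z - δ) (z + δ) := ⟨by linarith, le_rfl⟩
  rcases hmono with hmono | hanti
  · exact mem_of_superset (Icc_mem_nhds (hmono hl hc (by linarith)) (hmono hc hr (by linarith)))
      (intermediate_value_Icc (by linarith) hf)
  · exact mem_of_superset (Icc_mem_nhds (hanti hc hr (by linarith)) (hanti hl hc (by linarith)))
      (intermediate_value_Icc' (by linarith) hf)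

section ChangeOfVariables

variable {f f' : ℝ → ℝ} {s A : Set ℝ}

theorem integrableOn_indicator_comp_mul_abs_deriv (hs : MeasurableSet s) (hA : MeasurableSet A)
    (hAfin : volume A ≠ ⊤) (hderiv : ∀ t ∈ s, HasDerivWithinAt f (f' t) s t) (hinj : InjOn f s) :
    IntegrableOn (fun t ↦ A.indicator (fun _ ↦ (1 : ℝ)) (f t) * |f' t|) s := by
  have hg : Integrable (A.indicator fun _ ↦ (1 : ℝ)) :=
    (integrable_indicator_iff hA).2 (integrableOn_const hAfin)
  simpa only [smul_eq_mul, mul_comm] using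
    (integrableOn_image_iff_integrableOn_abs_deriv_smul hs hderiv hinj _).1 hg.integrableOn

theorem setIntegral_indicator_comp_mul_abs_deriv (hs : MeasurableSet s) (hA : MeasurableSet A)
    (hderiv : ∀ t ∈ s, HasDerivWithinAt f (f' t) s t) (hinj : InjOn f s) (hAs : A ⊆ f '' s) :
    ∫ t in s, A.indicator (fun _ ↦ (1 : ℝ)) (f t) * |f' t| = volume.real A := by
  have hcov := integral_image_eq_integral_abs_deriv_smul hs hderiv hinj
    (A.indicator fun _ ↦ (1 : ℝ))
  simp only [smul_eq_mul, mul_comm |f' _|] at hcov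
  rw [← hcov, setIntegral_indicator hA, inter_eq_right.2 hAs, setIntegral_const, smul_eq_mul,
    mul_one]

theorem setIntegral_indicator_comp_mul_abs_deriv_eq_card {ι : Type*} {S : Set ℝ}
    {u : ι → Set ℝ} (F : Finset ι) (hS : MeasurableSet S) (hA : MeasurableSet A)
    (hAfin : volume A ≠ ⊤) (hu : ∀ i ∈ F, MeasurableSet (u i)) (huS : ∀ i ∈ F, u i ⊆ S)
    (hdisj : (F : Set ι).PairwiseDisjoint u)
    (hderiv : ∀ i ∈ F, ∀ t ∈ u i, HasDerivWithinAt f (f' t) (u i) t)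
    (hinj : ∀ i ∈ F, InjOn f (u i)) (hAu : ∀ i ∈ F, A ⊆ f '' u i)
    (hout : ∀ t ∈ S \ ⋃ i ∈ F, u i, f t ∉ A) :
    ∫ t in S, A.indicator (fun _ ↦ (1 : ℝ)) (f t) * |f' t| = F.card * volume.real A := by
  rw [setIntegral_eq_of_subset_of_forall_sdiff_eq_zero hS (iUnion₂_subset huS)
      fun t ht ↦ by rw [indicator_of_notMem (hout t ht), zero_mul],
    integral_biUnion_finset F hu hdisj fun i hi ↦
      integrableOn_indicator_comp_mul_abs_deriv (hu i hi) hA hAfin (hderiv i hi) (hinj i hi),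
    Finset.sum_congr rfl fun i hi ↦
      setIntegral_indicator_comp_mul_abs_deriv (hu i hi) hA (hderiv i hi) (hinj i hi) (hAu i hi),
    Finset.sum_const, nsmul_eq_mul]

end ChangeOfVariables

section NondegenerateZeros

variable {S : Set ℝ} {f f' : ℝ → ℝ}

theorem exists_pos_radius_isolating_zeros (hderiv : ∀ t ∈ S, HasDerivAt f (f' t) t)
    (hcont : ContinuousOn f' S) (hint : ∀ t ∈ S, f t = 0 → t ∈ interior S)
    (hnodeg : ∀ t ∈ S, f t = 0 → f' t ≠ 0) (hZ : {t ∈ S | f t = 0}.Finite) :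
    ∃ δ > 0, {t ∈ S | f t = 0}.PairwiseDisjoint (closedBall · δ) ∧
      ∀ z ∈ {t ∈ S | f t = 0}, closedBall z δ ⊆ S ∧
        (StrictMonoOn f (closedBall z δ) ∨ StrictAntiOn f (closedBall z δ)) := by
  have hlocal : ∀ z ∈ {t ∈ S | f t = 0}, ∀ᶠ δ in 𝓝 0, closedBall z δ ⊆ S ∧
      (StrictMonoOn f (closedBall z δ) ∨ StrictAntiOn f (closedBall z δ)) := by
    rintro z ⟨hzS, hfz⟩
    have hS : S ∈ 𝓝 z := mem_interior_iff_mem_nhds.1 (hint z hzS hfz)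
    exact (eventually_closedBall_subset hS).and <|
      eventually_strictMonoOn_or_strictAntiOn_closedBall (eventually_of_mem hS hderiv)
        (hcont.continuousAt hS) (hnodeg z hzS hfz)
  have hsmall := (hZ.eventually_pairwiseDisjoint_closedBall.and
    (hZ.eventually_all.2 hlocal)).filter_mono (nhdsWithin_le_nhds (s := Ioi 0))
  obtain ⟨δ, ⟨hdisj, hball⟩, hδpos⟩ := (hsmall.and self_mem_nhdsWithin).exists
  exact ⟨δ, hδpos, hdisj, hball⟩

theorem eventually_setIntegral_indicator_comp_mul_abs_deriv_eq (hS : IsCompact S)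
    (hderiv : ∀ t ∈ S, HasDerivAt f (f' t) t) (hcont : ContinuousOn f' S)
    (hint : ∀ t ∈ S, f t = 0 → t ∈ interior S) (hnodeg : ∀ t ∈ S, f t = 0 → f' t ≠ 0) :
    ∀ᶠ ε in 𝓝[>] 0, ∫ t in S, (Ioo (-ε) ε).indicator (fun _ ↦ (1 : ℝ)) (f t) * |f' t|
      = {t ∈ S | f t = 0}.ncard * (2 * ε) := by
  set Z := {t ∈ S | f t = 0}
  have hZ : Z.Finite := finite_zeros_of_hasDerivAt_ne_zero hS hderiv hnodeg
  obtain ⟨δ, hδ, hdisj, hball⟩ :=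
    exists_pos_radius_isolating_zeros hderiv hcont hint hnodeg hZ
  set F := hZ.toFinset
  have hF : ∀ z ∈ F, z ∈ Z := fun _ ↦ hZ.mem_toFinset.1
  have hf : ContinuousOn f S := HasDerivAt.continuousOn hderiv
  obtain ⟨c, hc, hcf⟩ : ∃ c > 0, ∀ t ∈ S \ ⋃ z ∈ F, ball z δ, c ≤ |f t| :=
    (hS.diff (isOpen_biUnion fun _ _ ↦ isOpen_ball)).exists_forall_le' (hf.mono sdiff_subset).abs
      fun t ht ↦ abs_pos.2 fun hft ↦
        ht.2 (mem_biUnion (hZ.mem_toFinset.2 ⟨ht.1, hft⟩) (mem_ball_self hδ))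
  have himage : ∀ᶠ ε in 𝓝 0, ∀ z ∈ Z, Ioo (-ε) ε ⊆ f '' closedBall z δ := by
    refine hZ.eventually_all.2 fun z hz ↦ ?_
    have hnhds := image_closedBall_mem_nhds_of_strictMonoOn_or_strictAntiOn hδ
      (hf.mono (hball z hz).1) (hball z hz).2
    rw [hz.2] at hnhds
    simpa only [Real.ball_zero_eq_Ioo] using eventually_ball_subset hnhds
  filter_upwards [nhdsWithin_le_nhds himage, Ioo_mem_nhdsGT hc] with ε hεZ hε
  have hout : ∀ t ∈ S \ ⋃ z ∈ F, closedBall z δ, f t ∉ Ioo (-ε) ε := fun t ht hft ↦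
    (hcf t ⟨ht.1, fun h ↦ ht.2 (biUnion_mono subset_rfl (fun _ _ ↦ ball_subset_closedBall) h)⟩)
      |>.not_gt ((abs_lt.2 hft).trans hε.2)
  rw [ncard_eq_toFinset_card Z hZ, setIntegral_indicator_comp_mul_abs_deriv_eq_card F
      hS.measurableSet measurableSet_Ioo measure_Ioo_lt_top.ne
      (fun _ _ ↦ measurableSet_closedBall) (fun z hz ↦ (hball z (hF z hz)).1)
      (by rwa [hZ.coe_toFinset])
      (fun z hz t ht ↦ (hderiv t ((hball z (hF z hz)).1 ht)).hasDerivWithinAt)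
      (fun z hz ↦ (hball z (hF z hz)).2.elim StrictMonoOn.injOn StrictAntiOn.injOn)
      (fun z hz ↦ hεZ z (hF z hz)) hout,
    Real.volume_real_Ioo_of_le (by linarith [hε.1])]
  ring

end NondegenerateZeros

theorem kac_counting_lemma_general (T : ℝ) (f f' : ℝ → ℝ)
    (hderiv : ∀ t ∈ Set.Icc 0 T, HasDerivAt f (f' t) t)
    (hcont : ContinuousOn f' (Set.Icc 0 T))
    (h0 : f 0 ≠ 0) (hTne : f T ≠ 0)
    (hnodeg : ∀ t ∈ Set.Icc 0 T, ¬(f t = 0 ∧ f' t = 0)) :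
    ({t ∈ Set.Icc 0 T | f t = 0}).Finite ∧
      Tendsto (fun ε : ℝ =>
          ∫ t in Set.Icc 0 T,
            (1 / (2 * ε)) * Set.indicator (Set.Ioo (-ε) ε) (fun _ => (1 : ℝ)) (f t)
              * |f' t|)
        (nhdsWithin 0 (Set.Ioi 0))
        (nhds (({t ∈ Set.Icc 0 T | f t = 0}).ncard : ℝ)) := by
  have hnodeg' : ∀ t ∈ Icc 0 T, f t = 0 → f' t ≠ 0 := fun t ht hft hf't ↦ hnodeg t ht ⟨hft, hf't⟩
  have hint : ∀ t ∈ Icc 0 T, f t = 0 → t ∈ interior (Icc 0 T) := by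
    rintro t ⟨ht0, htT⟩ hft
    rw [interior_Icc]
    exact ⟨ht0.lt_of_ne (by rintro rfl; exact h0 hft), htT.lt_of_ne (by rintro rfl; exact hTne hft)⟩
  refine ⟨finite_zeros_of_hasDerivAt_ne_zero isCompact_Icc hderiv hnodeg', ?_⟩
  refine tendsto_const_nhds.congr' ?_
  filter_upwards [eventually_setIntegral_indicator_comp_mul_abs_deriv_eq isCompact_Icc hderiv hcont
    hint hnodeg', self_mem_nhdsWithin] with ε hε hεpos
  simp_rw [mul_assoc]
  rw [integral_const_mul, hε]
  field_simp [(mem_Ioi.1 hεpos).ne']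

/-- Kac's counting lemma: if `f` is `C¹` on `[0,T]` (with derivative
`f'`), does not vanish at the endpoints, and has no zero which is also a zero of
`f'`, then its zero set in `[0,T]` is finite and its cardinality is the limit, as
`ε → 0⁺`, of `∫₀^T (1/(2ε)) 1_{(−ε,ε)}(f(t)) |f'(t)| dt`. -/
theorem kac_counting_lemma (T : ℝ) (hT : 0 < T) (f f' : ℝ → ℝ)
    (hderiv : ∀ t ∈ Set.Icc 0 T, HasDerivAt f (f' t) t)
    (hcont : ContinuousOn f' (Set.Icc 0 T))
    (h0 : f 0 ≠ 0) (hTne : f T ≠ 0)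
    (hnodeg : ∀ t ∈ Set.Icc 0 T, ¬(f t = 0 ∧ f' t = 0)) :
    ({t ∈ Set.Icc 0 T | f t = 0}).Finite ∧
      Tendsto (fun ε : ℝ =>
          ∫ t in Set.Icc 0 T,
            (1 / (2 * ε)) * Set.indicator (Set.Ioo (-ε) ε) (fun _ => (1 : ℝ)) (f t)
              * |f' t|)
        (nhdsWithin 0 (Set.Ioi 0))
        (nhds (({t ∈ Set.Icc 0 T | f t = 0}).ncard : ℝ)) :=
  kac_counting_lemma_general T f f' hderiv hcont h0 hTne hnodeg
end

section
/- (Covariance of Hermite polynomials of jointly Gaussian variables.) Let p, q ≥ 0 be integers and ρ ∈ [−1, 1]. Then ∫_ℝ ∫_ℝ H_p(x) · H_q(ρx + √(1−ρ²) y) · φ(x) φ(y) dx dy = δ_{pq} · p! · ρ^p, where δ_{pq} is the Kronecker delta. Equivalently, if Z₁, Z₂ are jointly Gaussian standard random variables with correlation ρ (realized as Z₂ = ρZ₁ + √(1−ρ²)Z with Z independent of Z₁), then E[H_p(Z₁) H_q(Z₂)] = δ_{pq} p! ρ^p. -/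
open MeasureTheory Real Filter
open scoped ENNReal NNReal

noncomputable section

/-- The standard Gaussian density `φ(t) = (2π)^{-1/2} e^{-t²/2}`. -/
def gaussDensity (t : ℝ) : ℝ := (Real.sqrt (2 * π))⁻¹ * Real.exp (-t ^ 2 / 2)

/-- The standard Gaussian distribution function `Φ(u) = ∫_{-∞}^u φ(t) dt`. -/
def gaussCDF (u : ℝ) : ℝ := ∫ t in Set.Iic u, gaussDensity t

/-- The k-th probabilists' Hermite polynomial,
`H_k(u) = (−1)^k e^{u²/2} (d/du)^k e^{−u²/2}`. -/
def hermiteH (k : ℕ) (u : ℝ) : ℝ :=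
  (-1) ^ k * Real.exp (u ^ 2 / 2) * iteratedDeriv k (fun t => Real.exp (-t ^ 2 / 2)) u

/-!
Write `E P = ∫ P φ` for the Gaussian expectation of a polynomial. Integration by parts against
`φ' = -X φ` gives Stein's identity `E (X P) = E P'`, which together with `H_{n+1} = X H_n - H_n'`
yields `E (H_{n+1} Q) = E (H_n Q')` and hence the orthogonality `E (H_p H_q) = δ_{pq} p!`.
For `s² = 1 - ρ²`, Stein's identity applied to `P(ρx + sY)` turns the three-term recursion
`H_{n+2} = X H_{n+1} - (n+1) H_n` into `E[H_n(ρx + sY)] = ρⁿ H_n(x)`; integrating out `y` first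
therefore reduces the covariance to `ρ^q E (H_p H_q)`.
-/

open Polynomial

def realHermite (n : ℕ) : ℝ[X] := (hermite n).map (Int.castRingHom ℝ)

@[simp]
lemma realHermite_zero : realHermite 0 = 1 := by simp [realHermite]

lemma realHermite_succ (n : ℕ) :
    realHermite (n + 1) = X * realHermite n - derivative (realHermite n) := by
  simp [realHermite, hermite_succ, derivative_map]

lemma derivative_realHermite_succ (n : ℕ) :
    derivative (realHermite (n + 1)) = C ((n : ℝ) + 1) * realHermite n := by
  induction n with
  | zero => simp [realHermite_succ]
  | succ n ih =>
    rw [realHermite_succ (n + 1), derivative_sub, derivative_mul, derivative_X, ih,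
      derivative_mul, derivative_C, realHermite_succ n]
    simp only [Nat.cast_succ, map_add, C_1]
    ring

lemma realHermite_succ_succ (n : ℕ) :
    realHermite (n + 2) = X * realHermite (n + 1) - C ((n : ℝ) + 1) * realHermite n := by
  rw [realHermite_succ (n + 1), derivative_realHermite_succ]

lemma hermiteH_eq_eval (k : ℕ) (u : ℝ) : hermiteH k u = (realHermite k).eval u := by
  rw [realHermite, ← algebraMap_int_eq, eval_map_algebraMap, hermite_eq_deriv_gaussian',
    hermiteH, iteratedDeriv_eq_iterate]
  simp only [neg_div]
  ring

lemma gaussDensity_eq_gaussianPDFReal : gaussDensity = ProbabilityTheory.gaussianPDFReal 0 1 := by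
  ext t
  simp [gaussDensity, ProbabilityTheory.gaussianPDFReal]

lemma integral_gaussDensity : ∫ t, gaussDensity t = 1 := by
  rw [gaussDensity_eq_gaussianPDFReal]
  exact ProbabilityTheory.integral_gaussianPDFReal_eq_one 0 one_ne_zero

lemma hasDerivAt_gaussDensity (t : ℝ) : HasDerivAt gaussDensity (-t * gaussDensity t) t := by
  have h := (((hasDerivAt_pow 2 t).fun_neg.div_const 2).exp).const_mul (Real.sqrt (2 * π))⁻¹
  refine h.congr_deriv ?_
  simp only [gaussDensity]
  ring

lemma integrable_pow_mul_gaussDensity (n : ℕ) :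
    Integrable fun t : ℝ => t ^ n * gaussDensity t := by
  have h := (integrable_rpow_mul_exp_neg_mul_sq (b := 1 / 2) (by norm_num)
    (s := n) (by linarith [n.cast_nonneg (α := ℝ)])).const_mul (Real.sqrt (2 * π))⁻¹
  convert h using 2 with t
  rw [Real.rpow_natCast, gaussDensity]
  ring_nf

lemma integrable_eval_mul_gaussDensity (P : ℝ[X]) :
    Integrable fun t : ℝ => P.eval t * gaussDensity t := by
  induction P using Polynomial.induction_on' with
  | add P Q hP hQ =>
    simp only [eval_add, add_mul]
    exact hP.add hQ
  | monomial n a =>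
    simp only [eval_monomial, mul_assoc]
    exact (integrable_pow_mul_gaussDensity n).const_mul a

def gaussExpectation : ℝ[X] →ₗ[ℝ] ℝ where
  toFun P := ∫ t, P.eval t * gaussDensity t
  map_add' P Q := by
    simp only [eval_add, add_mul]
    exact integral_add (integrable_eval_mul_gaussDensity P) (integrable_eval_mul_gaussDensity Q)
  map_smul' c P := by
    simp only [eval_smul, smul_eq_mul, mul_assoc, integral_const_mul, RingHom.id_apply]

lemma gaussExpectation_apply (P : ℝ[X]) :
    gaussExpectation P = ∫ t, P.eval t * gaussDensity t := rfl

@[simp]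
lemma gaussExpectation_one : gaussExpectation 1 = 1 := by
  simp [gaussExpectation_apply, integral_gaussDensity]

lemma gaussExpectation_C_mul (c : ℝ) (P : ℝ[X]) :
    gaussExpectation (C c * P) = c * gaussExpectation P := by
  rw [← smul_eq_C_mul, map_smul, smul_eq_mul]

lemma gaussExpectation_X_mul (P : ℝ[X]) :
    gaussExpectation (X * P) = gaussExpectation (derivative P) := by
  have hXP : Integrable ((fun t => P.eval t) * fun t => -t * gaussDensity t) := by
    convert (integrable_eval_mul_gaussDensity (-(X * P))) using 1
    ext t
    simp only [Pi.mul_apply, eval_neg, eval_mul, eval_X]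
    ring
  have h := integral_mul_deriv_eq_deriv_mul_of_integrable
    (fun t _ => P.hasDerivAt t) (fun t _ => hasDerivAt_gaussDensity t) hXP
    (integrable_eval_mul_gaussDensity _) (integrable_eval_mul_gaussDensity P)
  simp only [gaussExpectation_apply, eval_mul, eval_X]
  rw [← neg_neg (∫ t, (derivative P).eval t * gaussDensity t), ← h, ← integral_neg]
  congr 1 with t
  ring

lemma gaussExpectation_realHermite_succ_mul (n : ℕ) (Q : ℝ[X]) :
    gaussExpectation (realHermite (n + 1) * Q) =
      gaussExpectation (realHermite n * derivative Q) := by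
  rw [realHermite_succ, sub_mul, map_sub, mul_assoc, gaussExpectation_X_mul, derivative_mul,
    map_add, add_sub_cancel_left]

lemma gaussExpectation_realHermite_succ (n : ℕ) : gaussExpectation (realHermite (n + 1)) = 0 := by
  simpa using gaussExpectation_realHermite_succ_mul n 1

lemma gaussExpectation_realHermite_mul_realHermite (p q : ℕ) :
    gaussExpectation (realHermite p * realHermite q) = if p = q then (p.factorial : ℝ) else 0 := by
  induction p generalizing q with
  | zero =>
    cases q with
    | zero => simp
    | succ q => simp [gaussExpectation_realHermite_succ]
  | succ p ih =>
    cases q with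
    | zero => simp [gaussExpectation_realHermite_succ]
    | succ q =>
      rw [gaussExpectation_realHermite_succ_mul, derivative_realHermite_succ, mul_left_comm,
        gaussExpectation_C_mul, ih]
      simp only [Nat.add_right_cancel_iff]
      split_ifs with hpq
      · rw [hpq, Nat.factorial_succ, Nat.cast_mul, Nat.cast_succ]
      · rw [mul_zero]

lemma gaussExpectation_X_mul_comp (a s : ℝ) (P : ℝ[X]) :
    gaussExpectation ((X * P).comp (C a + C s * X)) =
      a * gaussExpectation (P.comp (C a + C s * X)) +
        s ^ 2 * gaussExpectation ((derivative P).comp (C a + C s * X)) := by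
  rw [mul_comp, X_comp, add_mul, map_add, gaussExpectation_C_mul, mul_assoc,
    gaussExpectation_C_mul, gaussExpectation_X_mul, derivative_comp]
  simp only [derivative_add, derivative_C, derivative_mul, derivative_X, zero_add, zero_mul,
    mul_one, gaussExpectation_C_mul]
  ring

lemma gaussExpectation_realHermite_comp {ρ s : ℝ} (hs : s ^ 2 = 1 - ρ ^ 2) (x : ℝ) (n : ℕ) :
    gaussExpectation ((realHermite n).comp (C (ρ * x) + C s * X)) =
      ρ ^ n * (realHermite n).eval x := by
  induction n using Nat.twoStepInduction with
  | zero => simp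
  | one =>
    rw [realHermite_succ, realHermite_zero, derivative_one, sub_zero, gaussExpectation_X_mul_comp]
    simp
  | more n ih₀ ih₁ =>
    rw [realHermite_succ_succ, sub_comp, map_sub, gaussExpectation_X_mul_comp, mul_comp, C_comp,
      gaussExpectation_C_mul, derivative_realHermite_succ, mul_comp, C_comp,
      gaussExpectation_C_mul, ih₀, ih₁, hs]
    simp only [eval_sub, eval_mul, eval_X, eval_C]
    ring

/-- covariance of Hermite polynomials of jointly standard Gaussian
variables with correlation `ρ`:
`E[H_p(Z₁) H_q(ρZ₁ + √(1−ρ²)Z)] = δ_{pq} p! ρ^p`. -/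
theorem hermite_covariance_formula (p q : ℕ) (ρ : ℝ) (hρ : ρ ∈ Set.Icc (-1 : ℝ) 1) :
    ∫ x : ℝ, ∫ y : ℝ,
        hermiteH p x * hermiteH q (ρ * x + Real.sqrt (1 - ρ ^ 2) * y) *
          gaussDensity x * gaussDensity y
      = if p = q then (Nat.factorial p : ℝ) * ρ ^ p else 0 := by
  have hs : Real.sqrt (1 - ρ ^ 2) ^ 2 = 1 - ρ ^ 2 := Real.sq_sqrt (by nlinarith [hρ.1, hρ.2])
  have inner (x : ℝ) : ∫ y : ℝ, hermiteH p x * hermiteH q (ρ * x + Real.sqrt (1 - ρ ^ 2) * y) *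
      gaussDensity x * gaussDensity y =
        ρ ^ q * ((realHermite p * realHermite q).eval x * gaussDensity x) := by
    have h := gaussExpectation_realHermite_comp hs x q
    simp only [gaussExpectation_apply, eval_comp, eval_add, eval_C, eval_mul, eval_X] at h
    simp only [hermiteH_eq_eval]
    calc _ = (realHermite p).eval x * gaussDensity x *
          ∫ y, (realHermite q).eval (ρ * x + Real.sqrt (1 - ρ ^ 2) * y) * gaussDensity y := by
          rw [← integral_const_mul]
          congr 1 with y
          ring
      _ = _ := by
          rw [h, eval_mul]
          ring
  simp_rw [inner]
  rw [integral_const_mul, ← gaussExpectation_apply, gaussExpectation_realHermite_mul_realHermite]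
  split_ifs with hpq
  · rw [hpq, mul_comm]
  · rw [mul_zero]
end
end
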